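/- Let G₁ and G₂ be connected simple graphs, each on n vertices with m edges, with signless Laplacian spectra μ⁺₁ ≥ ⋯ ≥ μ⁺_n > 1 and λ⁺₁ ≥ ⋯ ≥ λ⁺_n > 1 respectively (all signless Laplacian eigenvalues greater than one). If p is a positive integer such that 2m/(p+n) < min(μ⁺_n − 1, λ⁺_n − 1), then LE⁺((G₁ ∪ K̄_p) × K_p) = LE⁺((G₂ ∪ K̄_p) × K_p). -/

import Mathlib

/-!
The signless Laplacian of a Cartesian product is the Kronecker sum `Q(G) ⊗ I + I ⊗ Q(H)`, so the
signless Laplacian spectrum of `(G ∪ K̄_p) × K_p` consists of the sums `a + b`, where `a` runs over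
the spectrum of `G` together with `p` zeros and `b` over the spectrum of `K_p`, all of whose members
are at least `p - 2` (since `Q(K_p) - (p - 2) I` is the all-ones matrix). The average degree of the
product is `2m/(n+p) + p - 1`, and the hypothesis puts `a + b` above it whenever `a` comes from `G`.
For those terms the absolute values drop and only the trace `2m` of `Q(G)` survives; the energy is
`2mp²/(n+p) + p ∑_b |b - 2m/(n+p) - p + 1|`, which depends on `n`, `m` and `p` alone.
-/

open SimpleGraph Matrix Finset

/-- The number of edges of a simple graph. -/
noncomputable def edgeCount {V : Type*} (G : SimpleGraph V) : ℕ := G.edgeSet.ncard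

/-- The Laplacian spectrum of a finite simple graph, as a multiset of real numbers. -/
noncomputable def lapSpec {V : Type*} [Fintype V] (G : SimpleGraph V) : Multiset ℝ := by
  classical
  exact Finset.univ.val.map (G.posSemidef_lapMatrix ℝ).1.eigenvalues

/-- The signless Laplacian matrix `D + A` is Hermitian. -/
theorem signless_isHermitian {V : Type*} [Fintype V] [DecidableEq V] (G : SimpleGraph V)
    [DecidableRel G.Adj] : (G.degMatrix ℝ + G.adjMatrix ℝ).IsHermitian := by
  rw [Matrix.IsHermitian, conjTranspose_eq_transpose_of_trivial]
  exact Matrix.IsSymm.add (isSymm_degMatrix (G := G) (R := ℝ)) (isSymm_adjMatrix (G := G) (α := ℝ))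

/-- The signless Laplacian spectrum of a finite simple graph, as a multiset of reals. -/
noncomputable def signlessLapSpec {V : Type*} [Fintype V] (G : SimpleGraph V) : Multiset ℝ := by
  classical
  exact Finset.univ.val.map (signless_isHermitian G).eigenvalues

/-- The Laplacian energy `LE(G) = ∑ |μ_i - 2m/n|`. -/
noncomputable def lapEnergy {V : Type*} [Fintype V] (G : SimpleGraph V) : ℝ :=
  ((lapSpec G).map (fun x => |x - 2 * (edgeCount G : ℝ) / (Fintype.card V : ℝ)|)).sum

/-- The signless Laplacian energy `LE⁺(G) = ∑ |μ⁺_i - 2m/n|`. -/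
noncomputable def signlessLapEnergy {V : Type*} [Fintype V] (G : SimpleGraph V) : ℝ :=
  ((signlessLapSpec G).map (fun x => |x - 2 * (edgeCount G : ℝ) / (Fintype.card V : ℝ)|)).sum

/-- The join `G ∨ H` of two graphs: disjoint union plus all edges between them. -/
def SimpleGraph.join {V W : Type*} (G : SimpleGraph V) (H : SimpleGraph W) :
    SimpleGraph (V ⊕ W) where
  Adj a b :=
    match a, b with
    | Sum.inl u, Sum.inl v => G.Adj u v
    | Sum.inr u, Sum.inr v => H.Adj u v
    | Sum.inl _, Sum.inr _ => True
    | Sum.inr _, Sum.inl _ => True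
  symm := ⟨by rintro (u | u) (v | v) h <;> simp_all [adj_comm]⟩
  loopless := ⟨by rintro (u | u) h <;> simp_all⟩

/-- The tensor (Kronecker) product `G ⊗ H` of two graphs. -/
def SimpleGraph.tensorProd {V W : Type*} (G : SimpleGraph V) (H : SimpleGraph W) :
    SimpleGraph (V × W) where
  Adj a b := G.Adj a.1 b.1 ∧ H.Adj a.2 b.2
  symm := ⟨fun a b h => ⟨G.adj_symm h.1, H.adj_symm h.2⟩⟩
  loopless := ⟨fun a h => G.irrefl h.1⟩

open Polynomial Kronecker
open scoped ComplexOrder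

namespace Matrix.IsHermitian

variable {𝕜 m n : Type*} [RCLike 𝕜] [Fintype m] [Fintype n] [DecidableEq m] [DecidableEq n]

theorem le_eigenvalues_of_posSemidef_sub {A : Matrix n n 𝕜} (hA : A.IsHermitian) {c : ℝ}
    (h : (A - (c : 𝕜) • 1).PosSemidef) (i : n) : c ≤ hA.eigenvalues i := by
  set v : n → 𝕜 := ⇑(hA.eigenvectorBasis i)
  have hv : star v ⬝ᵥ v = 1 := by
    rw [dotProduct_comm, ← EuclideanSpace.inner_eq_star_dotProduct, inner_self_eq_norm_sq_to_K,
      hA.eigenvectorBasis.orthonormal.1 i]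
    simp
  have hnonneg := h.re_dotProduct_nonneg v
  rw [sub_mulVec, dotProduct_sub, smul_mulVec, one_mulVec, dotProduct_smul, hv, map_sub,
    ← hA.eigenvalues_eq] at hnonneg
  simpa using hnonneg

theorem charpoly_kronecker_one_add_one_kronecker {A : Matrix m m 𝕜} {B : Matrix n n 𝕜}
    (hA : A.IsHermitian) (hB : B.IsHermitian) :
    (A ⊗ₖ (1 : Matrix n n 𝕜) + (1 : Matrix m m 𝕜) ⊗ₖ B).charpoly =
      ∏ q : m × n, (X - C (((hA.eigenvalues q.1 + hB.eigenvalues q.2 : ℝ)) : 𝕜)) := by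
  set U : Matrix m m 𝕜 := ↑hA.eigenvectorUnitary
  set V : Matrix n n 𝕜 := ↑hB.eigenvectorUnitary
  have hU : U * star U = 1 := Unitary.mul_star_self_of_mem hA.eigenvectorUnitary.2
  have hV : V * star V = 1 := Unitary.mul_star_self_of_mem hB.eigenvectorUnitary.2
  have hUV : (star U ⊗ₖ star V) * (U ⊗ₖ V) = 1 := by
    rw [← mul_kronecker_mul, Unitary.star_mul_self_of_mem hA.eigenvectorUnitary.2,
      Unitary.star_mul_self_of_mem hB.eigenvectorUnitary.2, one_kronecker_one]
  have hdiag : diagonal (fun q : m × n => (((hA.eigenvalues q.1 + hB.eigenvalues q.2 : ℝ)) : 𝕜)) =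
      diagonal (RCLike.ofReal ∘ hA.eigenvalues) ⊗ₖ (1 : Matrix n n 𝕜) +
        (1 : Matrix m m 𝕜) ⊗ₖ diagonal (RCLike.ofReal ∘ hB.eigenvalues) := by
    ext ⟨i, j⟩ ⟨k, l⟩
    by_cases hik : i = k <;> by_cases hjl : j = l <;> simp [hik, hjl]
  have hsum : A ⊗ₖ (1 : Matrix n n 𝕜) + (1 : Matrix m m 𝕜) ⊗ₖ B =
      (U ⊗ₖ V) * diagonal (fun q : m × n => (((hA.eigenvalues q.1 + hB.eigenvalues q.2 : ℝ)) : 𝕜))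
        * (star U ⊗ₖ star V) := by
    rw [hdiag, mul_add, add_mul, ← mul_kronecker_mul, ← mul_kronecker_mul, ← mul_kronecker_mul,
      ← mul_kronecker_mul]
    simp only [mul_one, hU, hV]
    conv_lhs => rw [hA.spectral_theorem, hB.spectral_theorem]
    simp [U, V]
  rw [hsum, charpoly_mul_comm, ← mul_assoc, hUV, one_mul, charpoly_diagonal]

end Matrix.IsHermitian

namespace Multiset

theorem sum_bind_map_add {R : Type*} [AddCommMonoid R] (S T : Multiset R) :
    (S.bind fun a => T.map (a + ·)).sum = card T • S.sum + card S • T.sum := by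
  induction S using Multiset.induction_on with
  | empty => simp
  | cons a S ih =>
    rw [cons_bind, sum_add, ih, sum_map_add, map_const', sum_replicate, map_id', card_cons,
      sum_cons, add_nsmul, one_nsmul, nsmul_add]
    abel

theorem sum_map_abs_sub_bind_add {S T : Multiset ℝ} {t : ℝ} (h : ∀ a ∈ S, ∀ b ∈ T, t ≤ a + b) :
    ((S.bind fun a => T.map (a + ·)).map fun x => |x - t|).sum =
      card T * S.sum + card S * T.sum - card S * card T * t := by
  have hpos : ∀ x ∈ S.bind fun a => T.map (a + ·), |x - t| = x - t := by
    simp only [mem_bind, mem_map]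
    rintro _ ⟨a, ha, b, hb, rfl⟩
    exact abs_of_nonneg (sub_nonneg.mpr (h a ha b hb))
  rw [map_congr rfl hpos, sum_map_sub, map_id', sum_bind_map_add, map_const', sum_replicate,
    card_bind]
  simp [nsmul_eq_mul, mul_assoc]

theorem sum_map_bind_replicate_zero_add {R β : Type*} [AddZeroClass R] [AddCommMonoid β] (k : ℕ)
    (T : Multiset R) (f : R → β) : (((replicate k 0).bind fun a => T.map (a + ·)).map f).sum = k • (T.map f).sum := by
  simp [map_bind, sum_bind]

end Multiset

namespace SimpleGraph

variable {V W : Type*}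

theorem adjMatrix_boxProd [DecidableEq V] [DecidableEq W] (G : SimpleGraph V) (H : SimpleGraph W) [DecidableRel G.Adj]
    [DecidableRel H.Adj] [DecidableRel (G □ H).Adj] :
    (G □ H).adjMatrix ℝ = G.adjMatrix ℝ ⊗ₖ (1 : Matrix W W ℝ) + (1 : Matrix V V ℝ) ⊗ₖ H.adjMatrix ℝ := by
  ext ⟨a, b⟩ ⟨c, d⟩
  by_cases hac : a = c <;> by_cases hbd : b = d <;>
    simp [adjMatrix_apply, one_apply, boxProd_adj, hac, hbd]

section Degree

variable [Fintype V] [Fintype W]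

theorem degree_sum_inl (G : SimpleGraph V) (H : SimpleGraph W) [DecidableRel G.Adj]
    [DecidableRel (G ⊕g H).Adj] (v : V) : (G ⊕g H).degree (.inl v) = G.degree v := by
  rw [← card_neighborFinset_eq_degree, ← card_neighborFinset_eq_degree,
    show (G ⊕g H).neighborFinset (.inl v) = (G.neighborFinset v).map .inl by
      ext (w | w) <;> simp]
  exact card_map _

theorem degree_sum_inr (G : SimpleGraph V) (H : SimpleGraph W) [DecidableRel H.Adj]
    [DecidableRel (G ⊕g H).Adj] (w : W) : (G ⊕g H).degree (.inr w) = H.degree w := by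
  rw [← card_neighborFinset_eq_degree, ← card_neighborFinset_eq_degree,
    show (G ⊕g H).neighborFinset (.inr w) = (H.neighborFinset w).map .inr by
      ext (v | v) <;> simp]
  exact card_map _

end Degree

abbrev signlessLapMatrix [Fintype V] [DecidableEq V] (G : SimpleGraph V) [DecidableRel G.Adj] :
    Matrix V V ℝ :=
  G.degMatrix ℝ + G.adjMatrix ℝ

theorem signlessLapSpec_eq_roots [Fintype V] [DecidableEq V] (G : SimpleGraph V)
    [DecidableRel G.Adj] : signlessLapSpec G = (signlessLapMatrix G).charpoly.roots := by
  rw [(signless_isHermitian G).roots_charpoly_eq_eigenvalues, RCLike.ofReal_real_eq_id,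
    Function.id_comp, signlessLapSpec]
  congr!

theorem card_signlessLapSpec [Fintype V] (G : SimpleGraph V) :
    Multiset.card (signlessLapSpec G) = Fintype.card V := by
  simp [signlessLapSpec]

theorem edgeCount_eq_card_edgeFinset (G : SimpleGraph V) [Fintype G.edgeSet] :
    edgeCount G = #G.edgeFinset := by
  rw [edgeCount, edgeFinset, Set.ncard_eq_toFinset_card']

theorem sum_signlessLapSpec [Fintype V] [DecidableEq V] (G : SimpleGraph V) [DecidableRel G.Adj] :
    (signlessLapSpec G).sum = 2 * edgeCount G := by
  rw [signlessLapSpec_eq_roots, ← trace_eq_sum_roots_charpoly_of_splits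
    (signless_isHermitian G).splits_charpoly, trace_add, trace_adjMatrix, add_zero, degMatrix,
    trace_diagonal, ← Nat.cast_sum, sum_degrees_eq_twice_card_edges, edgeCount_eq_card_edgeFinset]
  push_cast
  rfl

section Matrices

variable [Fintype V] [Fintype W] [DecidableEq V] [DecidableEq W]

theorem degMatrix_boxProd (G : SimpleGraph V) (H : SimpleGraph W) [DecidableRel G.Adj]
    [DecidableRel H.Adj] [DecidableRel (G □ H).Adj] :
    (G □ H).degMatrix ℝ = G.degMatrix ℝ ⊗ₖ (1 : Matrix W W ℝ) + (1 : Matrix V V ℝ) ⊗ₖ H.degMatrix ℝ := by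
  ext ⟨a, b⟩ ⟨c, d⟩
  by_cases hac : a = c <;> by_cases hbd : b = d <;>
    simp [degMatrix, diagonal_apply, one_apply, degree_boxProd, hac, hbd]

theorem signlessLapMatrix_boxProd (G : SimpleGraph V) (H : SimpleGraph W) [DecidableRel G.Adj]
    [DecidableRel H.Adj] [DecidableRel (G □ H).Adj] :
    signlessLapMatrix (G □ H) =
      signlessLapMatrix G ⊗ₖ (1 : Matrix W W ℝ) + (1 : Matrix V V ℝ) ⊗ₖ signlessLapMatrix H := by
  rw [signlessLapMatrix, degMatrix_boxProd, adjMatrix_boxProd, add_kronecker, kronecker_add]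
  abel

theorem signlessLapMatrix_sum_bot (G : SimpleGraph V) [DecidableRel G.Adj]
    [DecidableRel (G ⊕g (⊥ : SimpleGraph W)).Adj] :
    signlessLapMatrix (G ⊕g (⊥ : SimpleGraph W)) = fromBlocks (signlessLapMatrix G) 0 0 0 := by
  ext (v | w) (v' | w') <;>
    simp [degMatrix, diagonal_apply, adjMatrix_apply, degree_sum_inl, degree_sum_inr]

end Matrices

section Spectra

variable [Fintype V] [Fintype W]

theorem signlessLapSpec_boxProd (G : SimpleGraph V) (H : SimpleGraph W) :
    signlessLapSpec (G □ H) =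
      (signlessLapSpec G).bind fun a => (signlessLapSpec H).map (a + ·) := by
  classical
  rw [signlessLapSpec_eq_roots, signlessLapMatrix_boxProd,
    (signless_isHermitian G).charpoly_kronecker_one_add_one_kronecker (signless_isHermitian H),
    roots_prod _ _ (prod_ne_zero_iff.mpr fun q _ => X_sub_C_ne_zero _), signlessLapSpec_eq_roots,
    signlessLapSpec_eq_roots, (signless_isHermitian G).roots_charpoly_eq_eigenvalues,
    (signless_isHermitian H).roots_charpoly_eq_eigenvalues, ← univ_product_univ, product_val]
  simp only [roots_X_sub_C, Multiset.bind_singleton, SProd.sprod, Multiset.product,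
    Multiset.map_bind, Multiset.map_map]
  simp [Multiset.bind_map]

theorem signlessLapSpec_sum_bot (G : SimpleGraph V) :
    signlessLapSpec (G ⊕g (⊥ : SimpleGraph W)) =
      signlessLapSpec G + Multiset.replicate (Fintype.card W) 0 := by
  classical
  rw [signlessLapSpec_eq_roots, signlessLapMatrix_sum_bot, charpoly_fromBlocks_zero₂₁,
    roots_mul ((charpoly_monic _).mul (charpoly_monic _)).ne_zero, ← signlessLapSpec_eq_roots]
  simp [Multiset.nsmul_singleton]

theorem signlessLapMatrix_top_sub_smul_one [DecidableEq V] :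
    signlessLapMatrix (⊤ : SimpleGraph V) - ((Fintype.card V : ℝ) - 2) • 1 =
      vecMulVec 1 (star 1) := by
  ext j k
  by_cases hjk : j = k
  · subst hjk
    simp [degMatrix, Nat.cast_sub (Fintype.card_pos_iff.mpr ⟨j⟩)]
    norm_num
  · simp [hjk, degMatrix]

theorem sum_signlessLapSpec_top :
    (signlessLapSpec (⊤ : SimpleGraph V)).sum = Fintype.card V * (Fintype.card V - 1) := by
  classical
  rw [sum_signlessLapSpec, edgeCount_eq_card_edgeFinset, card_edgeFinset_top_eq_card_choose_two,
    Nat.cast_choose_two]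
  ring

theorem sub_two_le_of_mem_signlessLapSpec_top {b : ℝ}
    (hb : b ∈ signlessLapSpec (⊤ : SimpleGraph V)) : (Fintype.card V : ℝ) - 2 ≤ b := by
  classical
  rw [signlessLapSpec_eq_roots, (signless_isHermitian _).roots_charpoly_eq_eigenvalues] at hb
  obtain ⟨i, -, rfl⟩ := Multiset.mem_map.mp hb
  refine (signless_isHermitian _).le_eigenvalues_of_posSemidef_sub ?_ i
  rw [RCLike.ofReal_real_eq_id, id, signlessLapMatrix_top_sub_smul_one]
  exact posSemidef_vecMulVec_self_star 1

theorem signlessLapEnergy_sum_bot_boxProd_top [Nonempty W]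
    (G : SimpleGraph V)
    (hG : ∀ a ∈ signlessLapSpec G,
      2 * edgeCount G / (Fintype.card V + Fintype.card W) + 1 ≤ a) :
    signlessLapEnergy ((G ⊕g (⊥ : SimpleGraph W)) □ (⊤ : SimpleGraph W)) =
      2 * edgeCount G * Fintype.card W ^ 2 / (Fintype.card V + Fintype.card W) +
        Fintype.card W * ((signlessLapSpec (⊤ : SimpleGraph W)).map fun b : ℝ =>
          |b - (2 * edgeCount G / (Fintype.card V + Fintype.card W) + (Fintype.card W - 1))|).sum := by
  classical
  set n : ℝ := (Fintype.card V : ℝ)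
  set p : ℝ := (Fintype.card W : ℝ)
  set m : ℝ := (edgeCount G : ℝ)
  have hp : 0 < p := by positivity
  have hnp : 0 < n + p := by positivity
  have hspec : signlessLapSpec ((G ⊕g (⊥ : SimpleGraph W)) □ (⊤ : SimpleGraph W)) =
      (signlessLapSpec G + Multiset.replicate (Fintype.card W) 0).bind fun a =>
        (signlessLapSpec (⊤ : SimpleGraph W)).map (a + ·) := by
    rw [signlessLapSpec_boxProd, signlessLapSpec_sum_bot]
  have havg : 2 * (edgeCount ((G ⊕g (⊥ : SimpleGraph W)) □ (⊤ : SimpleGraph W)) : ℝ) /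
      Fintype.card ((V ⊕ W) × W) = 2 * m / (n + p) + (p - 1) := by
    rw [← sum_signlessLapSpec, hspec, Multiset.sum_bind_map_add, Multiset.sum_add,
      Multiset.card_add, Multiset.sum_replicate, Multiset.card_replicate, sum_signlessLapSpec_top,
      sum_signlessLapSpec G, card_signlessLapSpec, card_signlessLapSpec, Fintype.card_prod,
      Fintype.card_sum]
    push_cast
    field_simp
    ring
  have hnonneg : ∀ a ∈ signlessLapSpec G, ∀ b ∈ signlessLapSpec (⊤ : SimpleGraph W),
      2 * m / (n + p) + (p - 1) ≤ a + b := fun a ha b hb => by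
    linarith [hG a ha, sub_two_le_of_mem_signlessLapSpec_top hb]
  rw [signlessLapEnergy, havg, hspec, Multiset.add_bind, Multiset.map_add, Multiset.sum_add,
    Multiset.sum_map_abs_sub_bind_add hnonneg, Multiset.sum_map_bind_replicate_zero_add,
    card_signlessLapSpec, card_signlessLapSpec, sum_signlessLapSpec, sum_signlessLapSpec_top]
  field_simp
  ring

end Spectra

end SimpleGraph

theorem stmt8 (n m p : ℕ) (hn : 1 ≤ n) (hp : 0 < p)
    (G₁ G₂ : SimpleGraph (Fin n))
    (hm₁ : edgeCount G₁ = m) (hm₂ : edgeCount G₂ = m)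
    (μ ν : Fin n → ℝ) (hμmono : Antitone μ) (hνmono : Antitone ν)
    (hμspec : signlessLapSpec G₁ = Finset.univ.val.map μ)
    (hνspec : signlessLapSpec G₂ = Finset.univ.val.map ν)
    (hcond : 2 * (m : ℝ) / ((p : ℝ) + (n : ℝ)) < min (μ ⟨n - 1, by omega⟩ - 1) (ν ⟨n - 1, by omega⟩ - 1)) :
    signlessLapEnergy ((G₁ ⊕g (⊥ : SimpleGraph (Fin p))) □ (⊤ : SimpleGraph (Fin p))) = signlessLapEnergy ((G₂ ⊕g (⊥ : SimpleGraph (Fin p))) □ (⊤ : SimpleGraph (Fin p))) := by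
  have : Nonempty (Fin p) := Fin.pos_iff_nonempty.mp hp
  have hbound : ∀ (G : SimpleGraph (Fin n)) (μ : Fin n → ℝ), edgeCount G = m → Antitone μ →
      signlessLapSpec G = univ.val.map μ → 2 * (m : ℝ) / (p + n) < μ ⟨n - 1, by omega⟩ - 1 →
      ∀ a ∈ signlessLapSpec G,
        2 * edgeCount G / (Fintype.card (Fin n) + Fintype.card (Fin p)) + 1 ≤ a := by
    rintro G μ rfl hμ hspec hlt a ha
    rw [hspec] at ha
    obtain ⟨i, -, rfl⟩ := Multiset.mem_map.mp ha
    have hlast : μ ⟨n - 1, by omega⟩ ≤ μ i := hμ (Nat.le_sub_one_of_lt i.2)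
    rw [Fintype.card_fin, Fintype.card_fin, add_comm (n : ℝ)]
    linarith
  rw [lt_min_iff] at hcond
  rw [signlessLapEnergy_sum_bot_boxProd_top G₁ (hbound G₁ μ hm₁ hμmono hμspec hcond.1),
    signlessLapEnergy_sum_bot_boxProd_top G₂ (hbound G₂ ν hm₂ hνmono hνspec hcond.2), hm₁, hm₂]
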